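/- arXiv:2103.03323 — 7 statements merged into one kernel-verified Lean document; each statement's English description precedes it below -/
import Mathlib

section
/- Let Z_1,...,Z_{m+1} be exchangeable random variables taking values in [0,1]. For any β ∈ (0,1), the probability that Z_{m+1} is at most the β-quantile of the empirical distribution placing mass 1/(m+1) on each of Z_1,...,Z_m and on the point 1, is at least β. -/
/-! With `k = ⌈β (m + 1)⌉`, the augmented `β`-quantile is the `k`-th smallest of
`Z₁, …, Zₘ, 1`, so `Zₘ₊₁` lies below it exactly when fewer than `k` of `Z₁, …, Zₘ` are strictly
below `Zₘ₊₁`, i.e. when the strict rank of `Zₘ₊₁` is below `k`. By exchangeability every index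
has the same probability of having strict rank below `k`, and for every outcome at least `k`
indices do; summing over the `m + 1` indices gives `(m + 1) ℙ ≥ k ≥ β (m + 1)`. -/

open Finset Filter Topology MeasureTheory
open scoped ENNReal

section strictRank

variable {ι α : Type*} [Fintype ι] [LinearOrder α]

def strictRank (v : ι → α) (j : ι) : ℕ :=
  #{i | v i < v j}

theorem strictRank_comp_perm (v : ι → α) (σ : Equiv.Perm ι) (j : ι) :
    strictRank (v ∘ σ) j = strictRank v (σ j) := by
  simp only [strictRank, card_filter, Function.comp_apply]
  exact Equiv.sum_comp σ fun i => if v i < v (σ j) then 1 else 0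

theorem strictRank_last {m : ℕ} (v : Fin (m + 1) → α) :
    strictRank v (Fin.last m) = #{i : Fin m | v i.castSucc < v (Fin.last m)} := by
  rw [strictRank, card_filter, card_filter, Fin.sum_univ_castSucc]
  simp

/-- Some `k` coordinates have strict rank below `k`: otherwise the minimum over the coordinates of
rank at least `k` would have at least `k` coordinates strictly below it, all of rank below `k`. -/
theorem le_card_filter_strictRank_lt (v : ι → α) {k : ℕ} (hk : k ≤ Fintype.card ι) :
    k ≤ #{j | strictRank v j < k} := by
  by_cases hall : ∀ j, strictRank v j < k
  · rwa [filter_true_of_mem fun j _ => hall j, card_univ]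
  push Not at hall
  obtain ⟨j₀, hj₀, hmin⟩ := exists_min_image {j | k ≤ strictRank v j} v
    (by simpa [Finset.Nonempty] using hall)
  rw [mem_filter] at hj₀
  refine hj₀.2.trans (card_le_card fun i hi => ?_)
  simp only [mem_filter, mem_univ, true_and] at hi ⊢
  by_contra! hki
  exact (hmin i (by simpa using hki)).not_gt hi

theorem measurable_strictRank [TopologicalSpace α] [OrderClosedTopology α]
    [SecondCountableTopology α] [MeasurableSpace α] [OpensMeasurableSpace α] (j : ι) :
    Measurable fun v : ι → α => strictRank v j := by
  simp only [strictRank, card_filter]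
  exact Finset.measurable_sum _ fun i _ => Measurable.ite
    (measurableSet_lt (measurable_pi_apply i) (measurable_pi_apply j)) measurable_const
    measurable_const

end strictRank

theorem measure_preimage_perm_eq {Ω ι α : Type*} [MeasurableSpace Ω] [MeasurableSpace α]
    (μ : Measure Ω) {X : ι → Ω → α} (hX : ∀ i, Measurable (X i)) (σ : Equiv.Perm ι)
    (hσ : μ.map (fun ω i => X (σ i) ω) = μ.map (fun ω i => X i ω))
    {B : Set (ι → α)} (hB : MeasurableSet B) :
    μ ((fun ω i => X (σ i) ω) ⁻¹' B) = μ ((fun ω i => X i ω) ⁻¹' B) := by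
  rw [← Measure.map_apply (measurable_pi_lambda _ fun i => hX (σ i)) hB, hσ,
    Measure.map_apply (measurable_pi_lambda _ hX) hB]

theorem measure_strictRank_lt_eq_of_exchangeable {Ω ι α : Type*} [MeasurableSpace Ω]
    [Fintype ι] [DecidableEq ι] [LinearOrder α] [TopologicalSpace α] [OrderClosedTopology α]
    [SecondCountableTopology α] [MeasurableSpace α] [OpensMeasurableSpace α]
    (μ : Measure Ω) {X : ι → Ω → α} (hX : ∀ i, Measurable (X i))
    (hexch : ∀ σ : Equiv.Perm ι, μ.map (fun ω i => X (σ i) ω) = μ.map (fun ω i => X i ω))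
    (k : ℕ) (i j : ι) :
    μ {ω | strictRank (fun l => X l ω) i < k} = μ {ω | strictRank (fun l => X l ω) j < k} := by
  have h := measure_preimage_perm_eq μ hX (Equiv.swap i j) (hexch _)
    (measurable_strictRank j (measurableSet_Iio (a := k)))
  change μ {ω | strictRank ((fun l => X l ω) ∘ Equiv.swap i j) j < k} =
    μ {ω | strictRank (fun l => X l ω) j < k} at h
  simpa only [strictRank_comp_perm, Equiv.swap_apply_right] using h

theorem natCast_mul_measure_univ_le_sum {Ω ι : Type*} [MeasurableSpace Ω] [Fintype ι]
    (μ : Measure Ω) {p : ι → Ω → Prop} [∀ j ω, Decidable (p j ω)]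
    (hp : ∀ j, MeasurableSet {ω | p j ω}) {k : ℕ} (hk : ∀ ω, k ≤ #{j | p j ω}) :
    k * μ Set.univ ≤ ∑ j, μ {ω | p j ω} := by
  have hcard : ∀ ω, (#{j | p j ω} : ℝ≥0∞) = ∑ j, {ω | p j ω}.indicator 1 ω := by
    intro ω
    simp only [card_filter, Nat.cast_sum, Nat.cast_ite, Nat.cast_one, Nat.cast_zero,
      Set.indicator_apply, Set.mem_ofPred_eq, Pi.one_apply]
  calc k * μ Set.univ = ∫⁻ _, (k : ℝ≥0∞) ∂μ := (lintegral_const _).symm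
    _ ≤ ∫⁻ ω, ∑ j, {ω | p j ω}.indicator 1 ω ∂μ :=
      lintegral_mono fun ω => (hcard ω) ▸ Nat.cast_le.mpr (hk ω)
    _ = ∑ j, μ {ω | p j ω} := by
      rw [lintegral_finsetSum _ fun j _ => measurable_one.indicator (hp j)]
      exact sum_congr rfl fun j _ => lintegral_indicator_one (hp j)

theorem exists_lt_filter_le_eq_filter_lt {ι : Type*} [Fintype ι] (w : ι → ℝ) (z : ℝ) :
    ∃ t < z, (univ.filter fun i => w i ≤ t) = univ.filter fun i => w i < z := by
  have hev : ∀ᶠ t in 𝓝[<] z, t < z ∧ ∀ i, w i < z → w i ≤ t :=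
    eventually_mem_nhdsWithin.and <| eventually_all.2 fun i => by
      by_cases hi : w i < z
      · filter_upwards [Ioo_mem_nhdsLT hi] with t ht _ using ht.1.le
      · exact Eventually.of_forall fun _ h => absurd h hi
  obtain ⟨t, htz, ht⟩ := hev.exists
  exact ⟨t, htz, filter_congr fun i _ => ⟨fun h => h.trans_lt htz, ht i⟩⟩

theorem le_sInf_quantile_iff_card_lt {ι : Type*} [Fintype ι] {β : ℝ} (hβ₀ : 0 < β)
    (hβ₁ : β ≤ 1) {w : ι → ℝ} (hw : ∀ i, w i ∈ Set.Icc 0 1) {z : ℝ} (hz : z ≤ 1) :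
    z ≤ sInf {t : ℝ | β ≤ ((#{i | w i ≤ t} : ℝ) + if (1 : ℝ) ≤ t then 1 else 0)
        / (Fintype.card ι + 1)} ↔
      #{i | w i < z} < ⌈β * (Fintype.card ι + 1)⌉₊ := by
  set n := Fintype.card ι
  set k := ⌈β * (n + 1)⌉₊
  set c : ℝ → ℕ := fun t => #{i | w i ≤ t} + if (1 : ℝ) ≤ t then 1 else 0
  have hS : {t : ℝ | β ≤ ((#{i | w i ≤ t} : ℝ) + if (1 : ℝ) ≤ t then 1 else 0) / (n + 1)}
      = {t | k ≤ c t} := by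
    ext t
    rw [Set.mem_ofPred_eq, Set.mem_ofPred_eq, le_div_iff₀ (by positivity), Nat.ceil_le]
    simp [c]
  have hk₀ : 0 < k := Nat.ceil_pos.2 (by positivity)
  have hkn : k ≤ n + 1 := Nat.ceil_le.2 (by push_cast; nlinarith)
  have hne : (1 : ℝ) ∈ {t | k ≤ c t} := by
    simpa [c, n, filter_true_of_mem fun i _ => (hw i).2] using hkn
  have hbdd : BddBelow {t | k ≤ c t} := by
    refine ⟨0, fun t ht => ?_⟩
    by_contra! ht₀
    have hempty : (univ.filter fun i => w i ≤ t) = ∅ :=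
      filter_false_of_mem fun i _ => not_le.2 (ht₀.trans_le (hw i).1)
    simp [c, hempty, (ht₀.trans zero_lt_one).not_ge] at ht
    omega
  rw [hS, le_csInf_iff hbdd ⟨1, hne⟩]
  constructor
  · intro hle
    obtain ⟨t, htz, heq⟩ := exists_lt_filter_le_eq_filter_lt w z
    by_contra! hkz
    refine (hle t ?_).not_gt htz
    simp only [Set.mem_ofPred_eq, c, heq]
    omega
  · intro hlt t ht
    by_contra! htz
    have hsub : (univ.filter fun i => w i ≤ t) ⊆ univ.filter fun i => w i < z := fun i => by
      simpa only [mem_filter, mem_univ, true_and] using fun h => h.trans_lt htz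
    simp only [Set.mem_ofPred_eq, c, if_neg (htz.trans_le hz).not_ge] at ht
    have := card_le_card hsub
    omega

theorem ENNReal.ofReal_le_natCeil_mul_div (x : ℝ) {n : ℕ} (hn : n ≠ 0) :
    ENNReal.ofReal x ≤ ⌈x * n⌉₊ / n := by
  rw [ENNReal.le_div_iff_mul_le (Or.inl (by simpa)) (Or.inl (ENNReal.natCast_ne_top n)),
    ← ENNReal.ofReal_natCast n, ← ENNReal.ofReal_mul' (Nat.cast_nonneg _),
    ← ENNReal.ofReal_natCast ⌈x * n⌉₊]
  exact ENNReal.ofReal_le_ofReal (Nat.le_ceil _)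

/-- For exchangeable [0,1]-valued random variables Z_1,...,Z_{m+1},
the probability that Z_{m+1} is at most the β-quantile of the empirical
distribution on {Z_1,...,Z_m} ∪ {1} is at least β. -/
theorem conformal_coverage_lower_bound
    {Ω : Type*} [MeasurableSpace Ω] (μ : Measure Ω) [IsProbabilityMeasure μ]
    (m : ℕ) (Z : Fin (m + 1) → Ω → ℝ)
    (hmeas : ∀ i, Measurable (Z i))
    (hrange : ∀ i ω, Z i ω ∈ Set.Icc (0 : ℝ) 1)
    (hexch : ∀ σ : Equiv.Perm (Fin (m + 1)),
      Measure.map (fun ω => fun i => Z (σ i) ω) μ = Measure.map (fun ω => fun i => Z i ω) μ)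
    (β : ℝ) (hβ : β ∈ Set.Ioo (0 : ℝ) 1) :
    ENNReal.ofReal β ≤
      μ {ω | Z (Fin.last m) ω ≤
        sInf {t : ℝ | β ≤ (((Finset.univ.filter fun i : Fin m => Z i.castSucc ω ≤ t).card : ℝ)
            + (if (1 : ℝ) ≤ t then 1 else 0)) / (m + 1)}} := by
  obtain ⟨hβ₀, hβ₁⟩ := hβ
  set k := ⌈β * ((m : ℝ) + 1)⌉₊
  have hmeas_rank : ∀ j, MeasurableSet {ω | strictRank (fun i => Z i ω) j < k} := fun j =>
    measurable_pi_lambda _ hmeas (measurable_strictRank j measurableSet_Iio)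
  have hkm : k ≤ Fintype.card (Fin (m + 1)) := by
    rw [Fintype.card_fin]; exact Nat.ceil_le.2 (by push_cast; nlinarith)
  have hsum : (k : ℝ≥0∞) ≤ (m + 1) * μ {ω | strictRank (fun i => Z i ω) (Fin.last m) < k} := by
    simpa [measure_strictRank_lt_eq_of_exchangeable μ hmeas hexch k _ (Fin.last m)] using
      natCast_mul_measure_univ_le_sum μ hmeas_rank
        fun ω => le_card_filter_strictRank_lt (fun i => Z i ω) hkm
  calc ENNReal.ofReal β ≤ k / (m + 1) := by
        simpa using ENNReal.ofReal_le_natCeil_mul_div β m.succ_ne_zero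
    _ ≤ μ {ω | strictRank (fun i => Z i ω) (Fin.last m) < k} := ENNReal.div_le_of_le_mul' hsum
    _ = _ := by
      congr 1; ext ω
      have hiff := le_sInf_quantile_iff_card_lt hβ₀ hβ₁.le
        (w := fun i : Fin m => Z i.castSucc ω) (fun i => hrange _ ω) (hrange (Fin.last m) ω).2
      rw [Fintype.card_fin] at hiff
      rw [Set.mem_ofPred_eq, Set.mem_ofPred_eq, hiff, strictRank_last]
end

section
/- Let Z_1,...,Z_{m+1} be exchangeable random variables taking values in [0,1] that are almost surely pairwise distinct. For any β ∈ (0,1), the probability that Z_{m+1} is at most the β-quantile of the empirical distribution on {Z_1,...,Z_m} ∪ {1} is at most β + 1/(m+1). -/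
/-!
Put `k = ⌈β (m + 1)⌉` and let the rank `R_j` of `Z_j` be the number of `Z_i` strictly below it.
If `R_{m+1} ≥ k`, the largest `Z_i` below `Z_{m+1}` has at least `k ≥ β (m + 1)` of
`Z_1, …, Z_m` at or below it, so the quantile lies strictly below `Z_{m+1}`; hence the event
forces `R_{m+1} < k`. By exchangeability the events `{R_j < k}` all have the same probability,
and as the values are a.s. distinct, so are their ranks, so at most `k` of these events occur at
once. Summing over `j` gives `(m + 1) P(R_{m+1} < k) ≤ k < β (m + 1) + 1`.
-/

open MeasureTheory Finset
open scoped ENNReal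

def rank {ι α : Type*} [Fintype ι] [LT α] [DecidableLT α] (v : ι → α) (j : ι) : ℕ :=
  #{i | v i < v j}

lemma exists_lt_le_card_filter_le {ι α : Type*} [LinearOrder α] {s : Finset ι} {v : ι → α}
    {x : α} {k : ℕ} (hk : 0 < k) (h : k ≤ #{i ∈ s | v i < x}) :
    ∃ t < x, k ≤ #{i ∈ s | v i ≤ t} := by
  obtain ⟨i₀, hi₀, hmax⟩ := exists_max_image {i ∈ s | v i < x} v (card_pos.mp (hk.trans_le h))
  refine ⟨v i₀, (mem_filter.mp hi₀).2, h.trans (card_le_card fun i hi => ?_)⟩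
  exact mem_filter.mpr ⟨(mem_filter.mp hi).1, hmax i hi⟩

section Rank

variable {ι α : Type*} [Fintype ι]

lemma rank_comp_perm [LT α] [DecidableLT α] (v : ι → α) (σ : Equiv.Perm ι) (j : ι) :
    rank (v ∘ σ) j = rank v (σ j) := by
  rw [rank, rank, ← Fintype.card_subtype, ← Fintype.card_subtype]
  exact Fintype.card_congr (σ.subtypeEquiv fun _ => Iff.rfl)

lemma rank_lt_rank [Preorder α] [DecidableLT α] {v : ι → α} {j j' : ι} (h : v j < v j') :
    rank v j < rank v j' := by
  refine card_lt_card ⟨fun i hi => ?_, fun hsub => ?_⟩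
  · simp only [mem_filter, mem_univ, true_and] at hi ⊢
    exact hi.trans h
  · simpa using hsub (by simpa using h : j ∈ ({i | v i < v j'} : Finset ι))

lemma rank_last [Preorder α] [DecidableLT α] {m : ℕ} (v : Fin (m + 1) → α) :
    rank v (Fin.last m) = #{i : Fin m | v i.castSucc < v (Fin.last m)} := by
  rw [rank, card_filter, Fin.sum_univ_castSucc, card_filter]
  simp

lemma rank_injective [LinearOrder α] {v : ι → α} (hv : Function.Injective v) :
    Function.Injective (rank v) := by
  intro j j' h
  by_contra hne
  rcases (hv.ne hne).lt_or_gt with hlt | hlt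
  · exact (rank_lt_rank hlt).ne h
  · exact (rank_lt_rank hlt).ne' h

lemma card_rank_lt_le [LinearOrder α] {v : ι → α} (hv : Function.Injective v) (k : ℕ) :
    #{j | rank v j < k} ≤ k := by
  simpa using card_le_card_of_injOn (t := range k) (rank v)
    (fun j hj => by simpa using hj) (rank_injective hv).injOn

end Rank

lemma bddBelow_quantileSet {ι : Type*} [Fintype ι] (w : ι → ℝ) {β : ℝ} (hβ : 0 < β) (c : ℝ) :
    BddBelow {t : ℝ | β ≤ ((#{i | w i ≤ t} : ℝ) + (if (1 : ℝ) ≤ t then 1 else 0)) / c} := by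
  obtain ⟨b, hb⟩ := ((Set.finite_range w).insert 1).bddBelow
  refine ⟨b, fun u hu => ?_⟩
  by_contra! hub
  have hu1 : ¬ 1 ≤ u := (hub.trans_le (hb (Set.mem_insert 1 _))).not_ge
  have hw : ∀ i, ¬ w i ≤ u := fun i =>
    (hub.trans_le (hb (Set.mem_insert_of_mem 1 (Set.mem_range_self i)))).not_ge
  simp [hu1, hw] at hu
  linarith

lemma rank_last_lt_ceil_of_le_sInf {m : ℕ} {v : Fin (m + 1) → ℝ} {β : ℝ} (hβ : 0 < β)
    (h : v (Fin.last m) ≤ sInf {t : ℝ | β ≤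
      ((#{i : Fin m | v i.castSucc ≤ t} : ℝ) + (if (1 : ℝ) ≤ t then 1 else 0)) / (m + 1)}) :
    rank v (Fin.last m) < ⌈β * (m + 1)⌉₊ := by
  by_contra! hk
  rw [rank_last] at hk
  obtain ⟨t, hlt, hcount⟩ := exists_lt_le_card_filter_le (Nat.ceil_pos.2 (by positivity)) hk
  have hmem : β ≤
      ((#{i : Fin m | v i.castSucc ≤ t} : ℝ) + (if (1 : ℝ) ≤ t then 1 else 0)) / (m + 1) := by
    rw [le_div_iff₀ (by positivity)]
    have := (Nat.le_ceil (β * (m + 1))).trans (Nat.cast_le.2 hcount : (⌈β * (m + 1)⌉₊ : ℝ) ≤ _)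
    split_ifs <;> linarith
  exact (h.trans (csInf_le (bddBelow_quantileSet _ hβ _) hmem)).not_gt hlt

lemma ae_injective_of_measure_eq_zero {Ω ι γ : Type*} [MeasurableSpace Ω] {μ : Measure Ω}
    [Countable ι] {X : ι → Ω → γ} (hdist : ∀ i j, i ≠ j → μ {ω | X i ω = X j ω} = 0) :
    ∀ᵐ ω ∂μ, Function.Injective fun i => X i ω := by
  have hne : ∀ᵐ ω ∂μ, ∀ i j, i ≠ j → X i ω ≠ X j ω := by
    refine ae_all_iff.2 fun i => ae_all_iff.2 fun j => ?_
    rcases eq_or_ne i j with rfl | hij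
    · simp
    · exact (measure_eq_zero_iff_ae_notMem.1 (hdist i j hij)).mono fun ω h _ => h
  exact hne.mono fun ω h a b hab => by_contra fun hab' => h a b hab' hab

section Exchangeable

variable {Ω ι α : Type*} [MeasurableSpace Ω] {μ : Measure Ω} [Fintype ι]
  [MeasurableSpace α] [TopologicalSpace α] [OpensMeasurableSpace α] [LinearOrder α]
  [OrderClosedTopology α] [SecondCountableTopology α] {Z : ι → Ω → α}

lemma measurable_rank (j : ι) : Measurable fun v : ι → α => rank v j := by
  simp only [rank, card_filter]
  exact Finset.measurable_sum _ fun i _ =>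
    Measurable.ite (measurableSet_lt (measurable_pi_apply i) (measurable_pi_apply j))
      measurable_const measurable_const

variable [DecidableEq ι]

lemma measure_rank_lt_eq (hmeas : ∀ i, Measurable (Z i))
    (hexch : ∀ σ : Equiv.Perm ι,
      Measure.map (fun ω i => Z (σ i) ω) μ = Measure.map (fun ω i => Z i ω) μ)
    (j j' : ι) (k : ℕ) :
    μ {ω | rank (fun i => Z i ω) j < k} = μ {ω | rank (fun i => Z i ω) j' < k} := by
  set σ := Equiv.swap j j'
  have hS : MeasurableSet {v : ι → α | rank v j' < k} := measurable_rank j' measurableSet_Iio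
  have h := congrArg (· {v | rank v j' < k}) (hexch σ)
  rw [Measure.map_apply (measurable_pi_lambda _ fun i => hmeas (σ i)) hS,
    Measure.map_apply (measurable_pi_lambda _ hmeas) hS] at h
  have hσ : ∀ ω, rank (fun i => Z (σ i) ω) j' = rank (fun i => Z i ω) j := fun ω => by
    rw [← Equiv.swap_apply_right j j']
    exact rank_comp_perm (fun i => Z i ω) σ j'
  simpa [Set.preimage, hσ] using h

lemma card_mul_measure_rank_lt_le [IsProbabilityMeasure μ] (hmeas : ∀ i, Measurable (Z i))
    (hexch : ∀ σ : Equiv.Perm ι,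
      Measure.map (fun ω i => Z (σ i) ω) μ = Measure.map (fun ω i => Z i ω) μ)
    (hinj : ∀ᵐ ω ∂μ, Function.Injective fun i => Z i ω) (j : ι) (k : ℕ) :
    (Fintype.card ι : ℝ≥0∞) * μ {ω | rank (fun i => Z i ω) j < k} ≤ k := by
  set A : ι → Set Ω := fun j => {ω | rank (fun i => Z i ω) j < k}
  have hA : ∀ j, MeasurableSet (A j) := fun j =>
    ((measurable_rank j).comp (measurable_pi_lambda _ hmeas)) measurableSet_Iio
  calc (Fintype.card ι : ℝ≥0∞) * μ (A j) = ∑ j', μ (A j') := by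
        simp [A, measure_rank_lt_eq hmeas hexch _ j]
    _ = ∫⁻ ω, ∑ j', (A j').indicator (fun _ => 1) ω ∂μ := by
        rw [lintegral_finsetSum _ fun j' _ => measurable_const.indicator (hA j')]
        simp [lintegral_indicator_const (hA _)]
    _ ≤ ∫⁻ _, (k : ℝ≥0∞) ∂μ := lintegral_mono_ae <| hinj.mono fun ω hω => by
        simp only [A, Set.indicator_apply, sum_boole]
        exact_mod_cast card_rank_lt_le hω k
    _ = k := by simp

end Exchangeable

lemma le_ofReal_add_one_div_of_mul_le_ceil {p : ℝ≥0∞} {β : ℝ} (hβ : 0 ≤ β) {n : ℕ}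
    (h : (n + 1) * p ≤ ⌈β * (n + 1)⌉₊) : p ≤ ENNReal.ofReal (β + 1 / (n + 1)) := by
  have hn : ((n : ℝ≥0∞) + 1) = ENNReal.ofReal (n + 1) := by
    rw [ENNReal.ofReal_add (by positivity) zero_le_one, ENNReal.ofReal_natCast, ENNReal.ofReal_one]
  rw [← ENNReal.mul_le_mul_iff_right (a := (n : ℝ≥0∞) + 1) (by simp) (by simp)]
  refine h.trans ?_
  rw [← ENNReal.ofReal_natCast, hn, ← ENNReal.ofReal_mul (by positivity)]
  refine ENNReal.ofReal_le_ofReal ((Nat.ceil_lt_add_one (by positivity)).le.trans_eq ?_)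
  field_simp

theorem conformal_coverage_upper_bound_general
    {Ω : Type*} [MeasurableSpace Ω] (μ : Measure Ω) [IsProbabilityMeasure μ]
    (m : ℕ) (Z : Fin (m + 1) → Ω → ℝ)
    (hmeas : ∀ i, Measurable (Z i))
    (hexch : ∀ σ : Equiv.Perm (Fin (m + 1)),
      Measure.map (fun ω => fun i => Z (σ i) ω) μ = Measure.map (fun ω => fun i => Z i ω) μ)
    (hdist : ∀ i j, i ≠ j → μ {ω | Z i ω = Z j ω} = 0)
    (β : ℝ) (hβ : β ∈ Set.Ioo (0 : ℝ) 1) :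
    μ {ω | Z (Fin.last m) ω ≤
        sInf {t : ℝ | β ≤ (((Finset.univ.filter fun i : Fin m => Z i.castSucc ω ≤ t).card : ℝ)
            + (if (1 : ℝ) ≤ t then 1 else 0)) / (m + 1)}} ≤
      ENNReal.ofReal (β + 1 / (m + 1)) := by
  have hcover : {ω | Z (Fin.last m) ω ≤
        sInf {t : ℝ | β ≤ (((Finset.univ.filter fun i : Fin m => Z i.castSucc ω ≤ t).card : ℝ)
            + (if (1 : ℝ) ≤ t then 1 else 0)) / (m + 1)}} ⊆
      {ω | rank (fun i => Z i ω) (Fin.last m) < ⌈β * (m + 1)⌉₊} :=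
    fun ω hω => rank_last_lt_ceil_of_le_sInf hβ.1 hω
  have hcount := card_mul_measure_rank_lt_le hmeas hexch (ae_injective_of_measure_eq_zero hdist)
    (Fin.last m) ⌈β * (m + 1)⌉₊
  rw [Fintype.card_fin, Nat.cast_succ] at hcount
  refine le_ofReal_add_one_div_of_mul_le_ceil hβ.1.le (le_trans ?_ hcount)
  gcongr

/-- For exchangeable, a.s. distinct [0,1]-valued random variables
Z_1,...,Z_{m+1}, the probability that Z_{m+1} is at most the β-quantile of the
empirical distribution on {Z_1,...,Z_m} ∪ {1} is at most β + 1/(m+1). -/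
theorem conformal_coverage_upper_bound
    {Ω : Type*} [MeasurableSpace Ω] (μ : Measure Ω) [IsProbabilityMeasure μ]
    (m : ℕ) (Z : Fin (m + 1) → Ω → ℝ)
    (hmeas : ∀ i, Measurable (Z i))
    (hrange : ∀ i ω, Z i ω ∈ Set.Icc (0 : ℝ) 1)
    (hexch : ∀ σ : Equiv.Perm (Fin (m + 1)),
      Measure.map (fun ω => fun i => Z (σ i) ω) μ = Measure.map (fun ω => fun i => Z i ω) μ)
    (hdist : ∀ i j, i ≠ j → μ {ω | Z i ω = Z j ω} = 0)
    (β : ℝ) (hβ : β ∈ Set.Ioo (0 : ℝ) 1) :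
    μ {ω | Z (Fin.last m) ω ≤
        sInf {t : ℝ | β ≤ (((Finset.univ.filter fun i : Fin m => Z i.castSucc ω ≤ t).card : ℝ)
            + (if (1 : ℝ) ≤ t then 1 else 0)) / (m + 1)}} ≤
      ENNReal.ofReal (β + 1 / (m + 1)) :=
  conformal_coverage_upper_bound_general μ m Z hmeas hexch hdist β hβ
end

section
/- Suppose the label shift assumption holds: distributions P and Q on X×Y (Y finite) satisfy Q(X ∈ A | Y = y) = P(X ∈ A | Y = y) for all measurable A and all y with q(y) > 0, where p(y) = P(Y=y), q(y) = Q(Y=y), and q(y) > 0 ⟹ p(y) > 0. Let f : X → S be measurable with values in a measurable space and B a measurable subset of S with P(f(X) ∈ B) > 0 and Q(f(X) ∈ B) > 0. Define w(y) = q(y)/p(y), π^P_{y} = P(Y=y | f(X) ∈ B), π^Q_{y} = Q(Y=y | f(X) ∈ B). Then for every label y: π^Q_{y} = w(y)·π^P_{y} / Σ_{k} w(k)·π^P_{k}. -/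
/-!
Under label shift the joint mass of the bin and a label transforms by the importance weight:
`Q(f(X) ∈ B, Y = y) = w(y) · P(f(X) ∈ B, Y = y)`, trivially so when `q(y) = 0`. Summing over the
labels gives `Q(f(X) ∈ B) = ∑ₖ w(k) · P(f(X) ∈ B, Y = k)`, and the formula follows by dividing
numerator and denominator by `P(f(X) ∈ B)`.
-/

open MeasureTheory

theorem mul_div_div_sum_mul_div_cancel_right₀ {ι : Type*} [Fintype ι] (w a : ι → ℝ)
    {c : ℝ} (hc : c ≠ 0) (y : ι) :
    w y * (a y / c) / ∑ j, w j * (a j / c) = w y * a y / ∑ j, w j * a j := by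
  simp_rw [← mul_div_assoc, ← Finset.sum_div]
  rw [div_div_div_cancel_right₀ hc]

section

variable {𝒳 ι : Type*} [MeasurableSpace 𝒳] [MeasurableSpace ι]

theorem measureReal_setOf_fst_mem_eq_sum [Fintype ι] [MeasurableSingletonClass ι]
    (μ : Measure (𝒳 × ι)) [IsFiniteMeasure μ] {A : Set 𝒳} (hA : MeasurableSet A) :
    μ.real {z | z.1 ∈ A} = ∑ y, μ.real {z | z.1 ∈ A ∧ z.2 = y} := by
  have hU : {z : 𝒳 × ι | z.1 ∈ A} = ⋃ y ∈ (Finset.univ : Finset ι), {z | z.1 ∈ A ∧ z.2 = y} := by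
    ext z; simp
  rw [hU, measureReal_biUnion_finset]
  · intro i _ j _ hij
    exact Set.disjoint_left.mpr fun z hi hj => hij (hi.2.symm.trans hj.2)
  · intro y _
    exact (measurable_fst hA).inter (measurable_snd (MeasurableSet.singleton y))

theorem measureReal_joint_eq_div_mul_of_label_shift (P Q : Measure (𝒳 × ι)) [IsFiniteMeasure Q]
    {A : Set 𝒳} {y : ι} {p : ℝ}
    (hshift : 0 < Q.real {z | z.2 = y} →
      Q.real {z | z.1 ∈ A ∧ z.2 = y} / Q.real {z | z.2 = y} = P.real {z | z.1 ∈ A ∧ z.2 = y} / p) :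
    Q.real {z | z.1 ∈ A ∧ z.2 = y} = Q.real {z | z.2 = y} / p * P.real {z | z.1 ∈ A ∧ z.2 = y} := by
  rcases (measureReal_nonneg (μ := Q) (s := {z | z.2 = y})).eq_or_lt with hq | hq
  · rw [← hq, zero_div, zero_mul]
    exact le_antisymm (hq ▸ measureReal_mono fun z hz => hz.2) measureReal_nonneg
  · rw [div_mul_eq_mul_div, mul_div_assoc, ← hshift hq, mul_div_cancel₀ _ hq.ne']

end

theorem label_shift_bin_correction_general
    {𝒳 S : Type*} [MeasurableSpace 𝒳] [MeasurableSpace S]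
    (K : ℕ) (P Q : Measure (𝒳 × Fin K)) [IsProbabilityMeasure Q]
    (f : 𝒳 → S) (hf : Measurable f) (B : Set S) (hB : MeasurableSet B)
    (pl ql : Fin K → ℝ)
    (hql : ∀ y, ql y = (Q {z | z.2 = y}).toReal)
    (hshift : ∀ A : Set 𝒳, MeasurableSet A → ∀ y, 0 < ql y →
      (Q {z | z.1 ∈ A ∧ z.2 = y}).toReal / ql y = (P {z | z.1 ∈ A ∧ z.2 = y}).toReal / pl y)
    (hPB : 0 < (P {z | f z.1 ∈ B}).toReal)
    (w πP πQ : Fin K → ℝ)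
    (hw : ∀ y, w y = ql y / pl y)
    (hπP : ∀ y, πP y = (P {z | f z.1 ∈ B ∧ z.2 = y}).toReal / (P {z | f z.1 ∈ B}).toReal)
    (hπQ : ∀ y, πQ y = (Q {z | f z.1 ∈ B ∧ z.2 = y}).toReal / (Q {z | f z.1 ∈ B}).toReal) :
    ∀ y, πQ y = w y * πP y / ∑ j, w j * πP j := by
  intro y
  have hA : MeasurableSet (f ⁻¹' B) := hf hB
  have hmass : ∀ k, Q.real {z | f z.1 ∈ B ∧ z.2 = k} = w k * P.real {z | f z.1 ∈ B ∧ z.2 = k} :=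
    fun k => by
      rw [hw, hql]
      exact measureReal_joint_eq_div_mul_of_label_shift P Q fun hk =>
        hql k ▸ hshift _ hA k (hql k ▸ hk)
  have hQB : Q.real {z | f z.1 ∈ B} = ∑ k, w k * P.real {z | f z.1 ∈ B ∧ z.2 = k} :=
    (measureReal_setOf_fst_mem_eq_sum Q hA).trans (Finset.sum_congr rfl fun k _ => hmass k)
  rw [← measureReal_def] at hPB
  simp only [hπQ, hπP, ← measureReal_def, hmass, hQB]
  exact (mul_div_div_sum_mul_div_cancel_right₀ w (fun k => P.real {z | f z.1 ∈ B ∧ z.2 = k})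
    hPB.ne' y).symm

/-- Proposition 1: under label shift, the bin-conditional class
probabilities on the target satisfy π^Q_y = w(y)π^P_y / Σ_k w(k)π^P_k. -/
theorem label_shift_bin_correction
    {𝒳 S : Type*} [MeasurableSpace 𝒳] [MeasurableSpace S]
    (K : ℕ) (P Q : Measure (𝒳 × Fin K)) [IsProbabilityMeasure P] [IsProbabilityMeasure Q]
    (f : 𝒳 → S) (hf : Measurable f) (B : Set S) (hB : MeasurableSet B)
    (pl ql : Fin K → ℝ)
    (hpl : ∀ y, pl y = (P {z | z.2 = y}).toReal)
    (hql : ∀ y, ql y = (Q {z | z.2 = y}).toReal)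
    (hsupp : ∀ y, 0 < ql y → 0 < pl y)
    (hshift : ∀ A : Set 𝒳, MeasurableSet A → ∀ y, 0 < ql y →
      (Q {z | z.1 ∈ A ∧ z.2 = y}).toReal / ql y = (P {z | z.1 ∈ A ∧ z.2 = y}).toReal / pl y)
    (hPB : 0 < (P {z | f z.1 ∈ B}).toReal) (hQB : 0 < (Q {z | f z.1 ∈ B}).toReal)
    (w πP πQ : Fin K → ℝ)
    (hw : ∀ y, w y = ql y / pl y)
    (hπP : ∀ y, πP y = (P {z | f z.1 ∈ B ∧ z.2 = y}).toReal / (P {z | f z.1 ∈ B}).toReal)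
    (hπQ : ∀ y, πQ y = (Q {z | f z.1 ∈ B ∧ z.2 = y}).toReal / (Q {z | f z.1 ∈ B}).toReal) :
    ∀ y, πQ y = w y * πP y / ∑ j, w j * πP j :=
  label_shift_bin_correction_general K P Q f hf B hB pl ql hql hshift hPB w πP πQ hw hπP hπQ
end

section
/- Let K ≥ 1 and let w : {1,...,K} → [0,∞) with w not identically zero, and set κ = (sup_k w(k)) / (inf_{k : w(k) ≠ 0} w(k)). Let π̂, π ∈ Δ_K be probability vectors with π supported only where w is nonzero, and define reweighted vectors T(v)_y = w(y)·v_y / Σ_k w(k)·v_k (assuming denominators positive for both π̂ and π). Then Σ_y |T(π̂)_y − T(π)_y| ≤ 2κ · Σ_y |π̂_y − π_y|. -/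
/-!
Write `A = ∑ w πh` and `B = ∑ w π`. Then
`T(πh) - T(π) = T(πh) · (B - A) / B + w · (πh - π) / B`,
and since `T(πh)` is a probability vector while `|B - A| ≤ ∑ w |πh - π|`, both terms contribute at
most `∑ w |πh - π| / B ≤ (sup w) ‖πh - π‖₁ / B`. Finally `B ≥ min {w ≠ 0}` because `π` is a
probability vector living where `w ≠ 0`.
-/

namespace Reweighting

variable {ι : Type*} [Fintype ι]

noncomputable def reweight (w v : ι → ℝ) (y : ι) : ℝ := w y * v y / ∑ j, w j * v j

theorem sum_reweight {w v : ι → ℝ} (h : ∑ j, w j * v j ≠ 0) : ∑ y, reweight w v y = 1 := by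
  simp only [reweight, ← Finset.sum_div, div_self h]

theorem reweight_nonneg {w v : ι → ℝ} (hw : ∀ j, 0 ≤ w j) (hv : ∀ j, 0 ≤ v j)
    (h : 0 < ∑ j, w j * v j) (y : ι) : 0 ≤ reweight w v y :=
  div_nonneg (mul_nonneg (hw y) (hv y)) h.le

theorem abs_sum_mul_sub_sum_mul_le {w : ι → ℝ} (hw : ∀ j, 0 ≤ w j) (u v : ι → ℝ) :
    |∑ j, w j * u j - ∑ j, w j * v j| ≤ ∑ j, w j * |u j - v j| := by
  rw [← Finset.sum_sub_distrib]
  refine (Finset.abs_sum_le_sum_abs _ _).trans (Finset.sum_le_sum fun j _ => ?_)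
  rw [← mul_sub, abs_mul, abs_of_nonneg (hw j)]

theorem abs_reweight_sub_reweight_le {w u v : ι → ℝ} (hw : ∀ j, 0 ≤ w j) (hu : ∀ j, 0 ≤ u j)
    (hA : 0 < ∑ j, w j * u j) (hB : 0 < ∑ j, w j * v j) (y : ι) :
    |reweight w u y - reweight w v y| ≤
      reweight w u y * (|∑ j, w j * v j - ∑ j, w j * u j| / ∑ j, w j * v j) +
        w y * |u y - v y| / ∑ j, w j * v j := by
  have hsplit : reweight w u y - reweight w v y =
      reweight w u y * ((∑ j, w j * v j - ∑ j, w j * u j) / ∑ j, w j * v j) +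
        w y * (u y - v y) / ∑ j, w j * v j := by
    simp only [reweight]
    field_simp
    ring
  rw [hsplit]
  refine (abs_add_le _ _).trans_eq ?_
  rw [abs_mul, abs_of_nonneg (reweight_nonneg hw hu hA y), abs_div, abs_div, abs_mul,
    abs_of_nonneg (hw y), abs_of_pos hB]

theorem sum_abs_reweight_sub_reweight_le {w u v : ι → ℝ} (hw : ∀ j, 0 ≤ w j)
    (hu : ∀ j, 0 ≤ u j) (hA : 0 < ∑ j, w j * u j) (hB : 0 < ∑ j, w j * v j) :
    ∑ y, |reweight w u y - reweight w v y| ≤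
      2 * (∑ y, w y * |u y - v y|) / ∑ j, w j * v j := by
  set D := ∑ y, w y * |u y - v y|
  have hBA : |∑ j, w j * v j - ∑ j, w j * u j| ≤ D := by
    simpa only [abs_sub_comm (v _)] using abs_sum_mul_sub_sum_mul_le hw v u
  calc ∑ y, |reweight w u y - reweight w v y|
      ≤ ∑ y, (reweight w u y * (|∑ j, w j * v j - ∑ j, w j * u j| / ∑ j, w j * v j) +
          w y * |u y - v y| / ∑ j, w j * v j) :=
        Finset.sum_le_sum fun y _ => abs_reweight_sub_reweight_le hw hu hA hB y
    _ = |∑ j, w j * v j - ∑ j, w j * u j| / ∑ j, w j * v j + D / ∑ j, w j * v j := by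
        rw [Finset.sum_add_distrib, ← Finset.sum_mul, sum_reweight hA.ne', one_mul,
          ← Finset.sum_div]
    _ ≤ D / ∑ j, w j * v j + D / ∑ j, w j * v j := by gcongr
    _ = 2 * D / ∑ j, w j * v j := by ring

theorem le_sum_mul_of_le_of_ne_zero {w v : ι → ℝ} {m : ℝ} (hv : ∀ j, 0 ≤ v j)
    (hv1 : ∑ j, v j = 1) (hm : ∀ j, v j ≠ 0 → m ≤ w j) : m ≤ ∑ j, w j * v j := by
  calc m = ∑ j, m * v j := by rw [← Finset.mul_sum, hv1, mul_one]
    _ ≤ ∑ j, w j * v j := Finset.sum_le_sum fun j _ => by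
        by_cases hj : v j = 0
        · simp [hj]
        · exact mul_le_mul_of_nonneg_right (hm j hj) (hv j)

theorem finite_setOf_apply_eq_ne_zero (w : ι → ℝ) :
    {x : ℝ | ∃ j, w j = x ∧ x ≠ 0}.Finite :=
  (Set.finite_range w).subset fun _ ⟨j, hj, _⟩ => Set.mem_range.mpr ⟨j, hj⟩

theorem csInf_setOf_apply_eq_ne_zero_le (w : ι → ℝ) {j : ι} (hj : w j ≠ 0) :
    sInf {x | ∃ j, w j = x ∧ x ≠ 0} ≤ w j :=
  csInf_le (finite_setOf_apply_eq_ne_zero w).bddBelow ⟨j, rfl, hj⟩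

theorem csInf_setOf_apply_eq_ne_zero_pos {w : ι → ℝ} (hw : ∀ j, 0 ≤ w j) (hne : ∃ j, w j ≠ 0) :
    0 < sInf {x | ∃ j, w j = x ∧ x ≠ 0} := by
  obtain ⟨j, hj⟩ := hne
  have hS : {x : ℝ | ∃ j, w j = x ∧ x ≠ 0}.Nonempty := ⟨w j, j, rfl, hj⟩
  obtain ⟨k, hk, hk0⟩ := hS.csInf_mem (finite_setOf_apply_eq_ne_zero w)
  rw [← hk] at hk0 ⊢
  exact (hw k).lt_of_ne' hk0

end Reweighting

open Reweighting in
theorem reweighting_stability_general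
    (K : ℕ) (w : Fin K → ℝ) (hw0 : ∀ j, 0 ≤ w j)
    (hwne : ∃ j, w j ≠ 0)
    (κ : ℝ) (hκ : κ = (⨆ j, w j) / sInf {x | ∃ j, w j = x ∧ x ≠ 0})
    (πh π : Fin K → ℝ)
    (hπh0 : ∀ y, 0 ≤ πh y)
    (hπ0 : ∀ y, 0 ≤ π y) (hπ1 : ∑ y, π y = 1)
    (hsuppπ : ∀ y, w y = 0 → π y = 0)
    (hden1 : 0 < ∑ j, w j * πh j) (hden2 : 0 < ∑ j, w j * π j) :
    ∑ y, |w y * πh y / (∑ j, w j * πh j) - w y * π y / (∑ j, w j * π j)| ≤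
      2 * κ * ∑ y, |πh y - π y| := by
  set M := ⨆ j, w j
  set m := sInf {x | ∃ j, w j = x ∧ x ≠ 0}
  have hm : 0 < m := csInf_setOf_apply_eq_ne_zero_pos hw0 hwne
  have hmB : m ≤ ∑ j, w j * π j := le_sum_mul_of_le_of_ne_zero hπ0 hπ1 fun j hj =>
    csInf_setOf_apply_eq_ne_zero_le w (mt (hsuppπ j) hj)
  have hwM : ∑ y, w y * |πh y - π y| ≤ M * ∑ y, |πh y - π y| := by
    rw [Finset.mul_sum]
    exact Finset.sum_le_sum fun y _ => mul_le_mul_of_nonneg_right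
      (le_ciSup (Set.finite_range w).bddAbove y) (abs_nonneg _)
  calc ∑ y, |w y * πh y / (∑ j, w j * πh j) - w y * π y / (∑ j, w j * π j)|
      ≤ 2 * (∑ y, w y * |πh y - π y|) / ∑ j, w j * π j :=
        sum_abs_reweight_sub_reweight_le hw0 hπh0 hden1 hden2
    _ ≤ 2 * (M * ∑ y, |πh y - π y|) / m := by
        have hD : 0 ≤ ∑ y, w y * |πh y - π y| :=
          Finset.sum_nonneg fun y _ => mul_nonneg (hw0 y) (abs_nonneg _)
        have hM : 0 ≤ M := Real.iSup_nonneg hw0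
        gcongr
    _ = 2 * κ * ∑ y, |πh y - π y| := by rw [hκ]; ring

/-- Theorem 3, part (a): the ℓ1 distance between reweighted
probability vectors is at most 2κ times the ℓ1 distance between the originals. -/
theorem reweighting_stability
    (K : ℕ) [NeZero K] (w : Fin K → ℝ) (hw0 : ∀ j, 0 ≤ w j)
    (hwne : ∃ j, w j ≠ 0)
    (κ : ℝ) (hκ : κ = (⨆ j, w j) / sInf {x | ∃ j, w j = x ∧ x ≠ 0})
    (πh π : Fin K → ℝ)
    (hπh0 : ∀ y, 0 ≤ πh y) (hπh1 : ∑ y, πh y = 1)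
    (hπ0 : ∀ y, 0 ≤ π y) (hπ1 : ∑ y, π y = 1)
    (hsuppπ : ∀ y, w y = 0 → π y = 0)
    (hden1 : 0 < ∑ j, w j * πh j) (hden2 : 0 < ∑ j, w j * π j) :
    ∑ y, |w y * πh y / (∑ j, w j * πh j) - w y * π y / (∑ j, w j * π j)| ≤
      2 * κ * ∑ y, |πh y - π y| :=
  reweighting_stability_general K w hw0 hwne κ hκ πh π hπh0 hπ0 hπ1 hsuppπ hden1 hden2
end

section
/- Let K ≥ 1, let w, ŵ : {1,...,K} → [0,∞), and let π̂ ∈ Δ_K be a probability vector. Define for a weight function u the reweighted vector T_u(π̂)_y = u(y)·π̂_y / Σ_k u(k)·π̂_k, assuming both denominators Σ_k w(k)·π̂_k and Σ_k ŵ(k)·π̂_k are positive, and assume π̂ is supported only on {k : w(k) ≠ 0}. Then Σ_y |T_{ŵ}(π̂)_y − T_w(π̂)_y| ≤ 2·(max_y |ŵ(y) − w(y)|) / (inf_{l : w(l) ≠ 0} w(l)). -/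
/-!
Writing `q = ŵ π̂` and `p = w π̂` with totals `Q` and `P`, each coordinate of `q / Q - p / P`
splits as `q (P - Q) / (Q P) + (q - p) / P`; summing absolute values gives
`‖q / Q - p / P‖₁ ≤ (|P - Q| + ‖q - p‖₁) / P ≤ 2 ‖q - p‖₁ / P`. Finally `‖q - p‖₁ ≤ ε ∑ π̂`
with `ε = max |ŵ - w|`, while `P ≥ m ∑ π̂` with `m` the least nonzero true weight, because `π̂`
only charges points where `w ≥ m`.
-/

open Finset

section Normalization

variable {ι : Type*} [Fintype ι]

theorem abs_sum_sub_sum_le_sum_abs_sub (p q : ι → ℝ) :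
    |∑ i, p i - ∑ i, q i| ≤ ∑ i, |q i - p i| := by
  rw [← sum_sub_distrib]
  exact (abs_sum_le_sum_abs _ _).trans_eq (sum_congr rfl fun i _ => abs_sub_comm _ _)

theorem sum_abs_div_sum_sub_div_sum_le (p q : ι → ℝ) (hq : ∀ i, 0 ≤ q i)
    (hP : 0 < ∑ i, p i) (hQ : 0 < ∑ i, q i) :
    ∑ i, |q i / ∑ j, q j - p i / ∑ j, p j| ≤ 2 * (∑ i, |q i - p i|) / ∑ i, p i := by
  set P := ∑ i, p i
  set Q := ∑ i, q i
  have hsplit (i : ι) : q i / Q - p i / P = q i * (P - Q) / (Q * P) + (q i - p i) / P := by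
    field_simp
    ring
  have hterm (i : ι) :
      |q i / Q - p i / P| ≤ q i * |P - Q| / (Q * P) + |q i - p i| / P := by
    rw [hsplit]
    refine (abs_add_le _ _).trans_eq ?_
    rw [abs_div, abs_div, abs_mul, abs_of_nonneg (hq i), abs_of_pos (mul_pos hQ hP),
      abs_of_pos hP]
  calc ∑ i, |q i / Q - p i / P|
      ≤ ∑ i, (q i * |P - Q| / (Q * P) + |q i - p i| / P) := sum_le_sum fun i _ => hterm i
    _ = (|P - Q| + ∑ i, |q i - p i|) / P := by
      rw [sum_add_distrib, ← sum_div, ← sum_div, ← sum_mul]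
      field_simp
      ring
    _ ≤ 2 * (∑ i, |q i - p i|) / ∑ i, p i := by
      gcongr
      linarith [abs_sum_sub_sum_le_sum_abs_sub p q]

end Normalization

section Weights

variable {ι : Type*} [Finite ι]

theorem finite_setOf_ne_zero_values (w : ι → ℝ) : {x | ∃ l, w l = x ∧ x ≠ 0}.Finite :=
  (Set.finite_range w).subset fun _ ⟨l, hl, _⟩ => ⟨l, hl⟩

theorem sInf_ne_zero_values_mem (w : ι → ℝ) (hw : ∃ j, w j ≠ 0) :
    sInf {x | ∃ l, w l = x ∧ x ≠ 0} ∈ {x | ∃ l, w l = x ∧ x ≠ 0} := by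
  obtain ⟨j, hj⟩ := hw
  exact Set.Nonempty.csInf_mem ⟨w j, j, rfl, hj⟩ (finite_setOf_ne_zero_values w)

theorem sInf_ne_zero_values_pos (w : ι → ℝ) (hw0 : ∀ j, 0 ≤ w j) (hw : ∃ j, w j ≠ 0) :
    0 < sInf {x | ∃ l, w l = x ∧ x ≠ 0} := by
  obtain ⟨l, hl, hne⟩ := sInf_ne_zero_values_mem w hw
  exact lt_of_le_of_ne (hl ▸ hw0 l) (Ne.symm hne)

theorem sInf_ne_zero_values_le (w : ι → ℝ) {y : ι} (hy : w y ≠ 0) :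
    sInf {x | ∃ l, w l = x ∧ x ≠ 0} ≤ w y :=
  csInf_le (finite_setOf_ne_zero_values w).bddBelow ⟨y, rfl, hy⟩

end Weights

theorem mul_sum_le_sum_mul_of_le_on_support {ι : Type*} [Fintype ι] (m : ℝ) (w π : ι → ℝ)
    (hπ : ∀ y, 0 ≤ π y) (hm : ∀ y, π y ≠ 0 → m ≤ w y) :
    m * ∑ y, π y ≤ ∑ y, w y * π y := by
  rw [mul_sum]
  refine sum_le_sum fun y _ => ?_
  by_cases h : π y = 0
  · simp [h]
  · exact mul_le_mul_of_nonneg_right (hm y h) (hπ y)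

theorem weight_estimation_error_general
    (K : ℕ) (w wh : Fin K → ℝ) (hw0 : ∀ j, 0 ≤ w j) (hwh0 : ∀ j, 0 ≤ wh j)
    (hwne : ∃ j, w j ≠ 0)
    (πh : Fin K → ℝ) (hπh0 : ∀ y, 0 ≤ πh y)
    (hsupp : ∀ y, w y = 0 → πh y = 0)
    (hden1 : 0 < ∑ j, w j * πh j) (hden2 : 0 < ∑ j, wh j * πh j) :
    ∑ y, |wh y * πh y / (∑ j, wh j * πh j) - w y * πh y / (∑ j, w j * πh j)| ≤
      2 * (⨆ y, |wh y - w y|) / sInf {x | ∃ l, w l = x ∧ x ≠ 0} := by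
  set ε := ⨆ y, |wh y - w y|
  set m := sInf {x | ∃ l, w l = x ∧ x ≠ 0}
  have hε0 : 0 ≤ ε := Real.iSup_nonneg fun y => abs_nonneg _
  have hm0 : 0 < m := sInf_ne_zero_values_pos w hw0 hwne
  have hdiff : ∑ y, |wh y * πh y - w y * πh y| ≤ ε * ∑ y, πh y := by
    rw [mul_sum]
    refine sum_le_sum fun y _ => ?_
    rw [← sub_mul, abs_mul, abs_of_nonneg (hπh0 y)]
    exact mul_le_mul_of_nonneg_right
      (le_ciSup (Set.finite_range fun y => |wh y - w y|).bddAbove y) (hπh0 y)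
  have hmass : m * ∑ y, πh y ≤ ∑ y, w y * πh y :=
    mul_sum_le_sum_mul_of_le_on_support m w πh hπh0 fun y hy =>
      sInf_ne_zero_values_le w (mt (hsupp y) hy)
  refine (sum_abs_div_sum_sub_div_sum_le _ _ (fun y => mul_nonneg (hwh0 y) (hπh0 y))
    hden1 hden2).trans ?_
  rw [div_le_div_iff₀ hden1 hm0]
  linarith [mul_le_mul_of_nonneg_left hdiff hm0.le, mul_le_mul_of_nonneg_left hmass hε0]

/-- Theorem 3, part (b): the ℓ1 effect of using estimated weights ŵ
instead of true weights w is at most 2·max|ŵ−w| / inf_{w≠0} w. -/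
theorem weight_estimation_error
    (K : ℕ) [NeZero K] (w wh : Fin K → ℝ) (hw0 : ∀ j, 0 ≤ w j) (hwh0 : ∀ j, 0 ≤ wh j)
    (hwne : ∃ j, w j ≠ 0)
    (πh : Fin K → ℝ) (hπh0 : ∀ y, 0 ≤ πh y) (hπh1 : ∑ y, πh y = 1)
    (hsupp : ∀ y, w y = 0 → πh y = 0)
    (hden1 : 0 < ∑ j, w j * πh j) (hden2 : 0 < ∑ j, wh j * πh j) :
    ∑ y, |wh y * πh y / (∑ j, wh j * πh j) - w y * πh y / (∑ j, w j * πh j)| ≤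
      2 * (⨆ y, |wh y - w y|) / sInf {x | ∃ l, w l = x ∧ x ≠ 0} :=
  weight_estimation_error_general K w wh hw0 hwh0 hwne πh hπh0 hsupp hden1 hden2
end

section
/- Let X be a random variable, g a measurable function of X taking finitely many values, h a measurable function of g(X), and Y a random variable with values in a finite set. Fix a label y and suppose |P(Y=y | g(X)=m) − h_y(x)| ≤ ε for almost every x with g(x)=m, for all m. Then |P(Y=y | h(X)) − h_y(X)| ≤ ε almost surely. -/
/-!
Since `σ(H ∘ G) ≤ σ(G)`, the tower property gives
`P(Y = y | H(G)) = E[P(Y = y | G) | H(G)]`, and `H(G)_y` is `σ(H ∘ G)`-measurable, so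
`P(Y = y | H(G)) - H(G)_y = E[P(Y = y | G) - H(G)_y | H(G)]`. On each bin `{G = m}` of positive
mass, `P(Y = y | G)` is the constant `P(Y = y, G = m) / P(G = m)`, which is `ε`-close to `H m y`;
the bins of mass zero are negligible. Conditional expectation preserves the bound `|·| ≤ ε`.
-/

open MeasureTheory ProbabilityTheory

namespace MeasureTheory

variable {Ω β : Type*} [mΩ : MeasurableSpace Ω] {μ : Measure Ω}

theorem ae_measure_preimage_singleton_ne_zero [Countable β] (T : Ω → β) :
    ∀ᵐ ω ∂μ, μ (T ⁻¹' {T ω}) ≠ 0 := by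
  rw [ae_iff]
  simp only [ne_eq, not_not]
  refine measure_mono_null (μ := μ)
    (t := ⋃ (b : β) (_ : μ (T ⁻¹' {b}) = 0), T ⁻¹' {b}) ?_ ?_
  · intro ω hω
    exact Set.mem_biUnion hω rfl
  · exact measure_iUnion_null fun b => measure_iUnion_null fun hb => hb

theorem measureReal_smul_condExp_comap {E : Type*} [NormedAddCommGroup E] [NormedSpace ℝ E]
    [CompleteSpace E] [IsFiniteMeasure μ] [mβ : MeasurableSpace β] [MeasurableSingletonClass β]
    {T : Ω → β} (hT : Measurable T) {f : Ω → E} (hf : Integrable f μ) (ω : Ω) :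
    μ.real (T ⁻¹' {T ω}) • μ[f | mβ.comap T] ω = ∫ x in T ⁻¹' {T ω}, f x ∂μ := by
  have hfibre : MeasurableSet[mβ.comap T] (T ⁻¹' {T ω}) :=
    ⟨{T ω}, measurableSet_singleton _, rfl⟩
  have hconst : ∀ x ∈ T ⁻¹' {T ω}, μ[f | mβ.comap T] x = μ[f | mβ.comap T] ω :=
    fun x hx => stronglyMeasurable_condExp.factorsThrough hx
  calc μ.real (T ⁻¹' {T ω}) • μ[f | mβ.comap T] ω
      = ∫ x in T ⁻¹' {T ω}, μ[f | mβ.comap T] x ∂μ := by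
        rw [setIntegral_congr_fun (hT.comap_le _ hfibre) hconst, setIntegral_const]
    _ = ∫ x in T ⁻¹' {T ω}, f x ∂μ := setIntegral_condExp hT.comap_le hf hfibre

theorem condExp_indicator_comap_eq_div [IsFiniteMeasure μ] [mβ : MeasurableSpace β]
    [MeasurableSingletonClass β] {T : Ω → β} (hT : Measurable T) {s : Set Ω}
    (hs : MeasurableSet s) {ω : Ω} (hω : μ (T ⁻¹' {T ω}) ≠ 0) :
    μ[s.indicator (1 : Ω → ℝ) | mβ.comap T] ω =
      μ.real (s ∩ T ⁻¹' {T ω}) / μ.real (T ⁻¹' {T ω}) := by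
  have hmass := measureReal_smul_condExp_comap hT (f := s.indicator 1)
    ((integrable_const (μ := μ) (1 : ℝ)).indicator hs) ω
  rw [integral_indicator_one hs, measureReal_restrict_apply hs, smul_eq_mul] at hmass
  have hpos : 0 < μ.real (T ⁻¹' {T ω}) := ENNReal.toReal_pos hω (measure_ne_top _ _)
  exact eq_div_of_mul_eq hpos.ne' ((mul_comm _ _).trans hmass)

theorem ae_abs_condExp_sub_le [IsFiniteMeasure μ] {m : MeasurableSpace Ω} (hm : m ≤ mΩ)
    {f g : Ω → ℝ} (hf : Integrable f μ) (hg : StronglyMeasurable[m] g) {R : ℝ}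
    (hfg : ∀ᵐ ω ∂μ, |f ω - g ω| ≤ R) :
    ∀ᵐ ω ∂μ, |μ[f | m] ω - g ω| ≤ R := by
  have hfg_int : Integrable (f - g) μ :=
    .of_bound (hf.aestronglyMeasurable.sub (hg.mono hm).aestronglyMeasurable) R hfg
  have hg_int : Integrable g μ := by simpa using hf.sub hfg_int
  have hpull : μ[f - g | m] =ᵐ[μ] μ[f | m] - g :=
    (condExp_sub hf hg_int m).trans (by rw [condExp_of_stronglyMeasurable hm hg hg_int])
  filter_upwards [ae_bdd_abs_condExp_of_ae_bdd_abs (m := m) (f := f - g) hfg, hpull]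
    with ω hbdd hω
  rwa [hω] at hbdd

end MeasureTheory

theorem binwise_accuracy_implies_calibration_general
    {Ω : Type*} [MeasurableSpace Ω] (μ : Measure Ω) [IsProbabilityMeasure μ]
    (M K : ℕ) (G : Ω → Fin M) (hG : Measurable G)
    (Y : Ω → Fin K) (hY : Measurable Y)
    (H : Fin M → Fin K → ℝ) (y : Fin K) (ε : ℝ)
    (hbin : ∀ m, μ {ω | G ω = m} ≠ 0 →
      |(μ {ω | Y ω = y ∧ G ω = m}).toReal / (μ {ω | G ω = m}).toReal - H m y| ≤ ε) :
    ∀ᵐ ω ∂μ,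
      |(μ[(fun ω' => if Y ω' = y then (1 : ℝ) else 0) |
          MeasurableSpace.comap (fun ω' => H (G ω')) inferInstance]) ω - H (G ω) y| ≤ ε := by
  have hYy : MeasurableSet {ω | Y ω = y} := hY (measurableSet_singleton y)
  have hind : (fun ω' => if Y ω' = y then (1 : ℝ) else 0) = {ω | Y ω = y}.indicator 1 := by
    ext ω; simp [Set.indicator_apply]
  rw [hind]
  have hcoarser : MeasurableSpace.comap (fun ω' => H (G ω')) inferInstance ≤
      MeasurableSpace.comap G inferInstance :=
    ((measurable_of_countable H).comp (comap_measurable G)).comap_le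
  have hbinwise : ∀ᵐ ω ∂μ,
      |μ[{ω | Y ω = y}.indicator 1 | MeasurableSpace.comap G inferInstance] ω - H (G ω) y|
        ≤ ε := by
    filter_upwards [ae_measure_preimage_singleton_ne_zero G] with ω hω
    rw [condExp_indicator_comap_eq_div hG hYy hω]
    exact hbin (G ω) hω
  have hHGy_meas : StronglyMeasurable[MeasurableSpace.comap (fun ω' => H (G ω')) inferInstance]
      fun ω => H (G ω) y :=
    ((measurable_pi_apply y).comp (comap_measurable fun ω' => H (G ω'))).stronglyMeasurable
  filter_upwards [ae_abs_condExp_sub_le (hcoarser.trans hG.comap_le) integrable_condExp hHGy_meas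
      hbinwise, condExp_condExp_of_le (f := {ω | Y ω = y}.indicator (1 : Ω → ℝ)) hcoarser
      hG.comap_le] with ω hbound htower
  rwa [← htower]

/-- if a predictor H∘G is within ε of the bin-conditional class
probabilities on every bin of positive probability, then it is ε-calibrated:
|P(Y=y | H(G)) − H(G)_y| ≤ ε almost surely. -/
theorem binwise_accuracy_implies_calibration
    {Ω : Type*} [MeasurableSpace Ω] (μ : Measure Ω) [IsProbabilityMeasure μ]
    (M K : ℕ) (G : Ω → Fin M) (hG : Measurable G)
    (Y : Ω → Fin K) (hY : Measurable Y)
    (H : Fin M → Fin K → ℝ) (y : Fin K) (ε : ℝ) (hε : 0 ≤ ε)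
    (hbin : ∀ m, μ {ω | G ω = m} ≠ 0 →
      |(μ {ω | Y ω = y ∧ G ω = m}).toReal / (μ {ω | G ω = m}).toReal - H m y| ≤ ε) :
    ∀ᵐ ω ∂μ,
      |(μ[(fun ω' => if Y ω' = y then (1 : ℝ) else 0) |
          MeasurableSpace.comap (fun ω' => H (G ω')) inferInstance]) ω - H (G ω) y| ≤ ε :=
  binwise_accuracy_implies_calibration_general μ M K G hG Y hY H y ε hbin
end

section
/- Let π ∈ Δ_K have distinct positive entries, ρ_y = Σ_{y'} π_{y'}·1{π_{y'} > π_y}, and let U ~ Uniform[0,1]. If Y is a random label drawn according to π, independent considerations give: the random score R = ρ_Y + U·π_Y is uniformly distributed on [0,1]. -/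
/-! Conditionally on `Y = y`, the score is uniform on `[ρ y, ρ y + π y]`, an interval of length
`π y = P(Y = y)`, so the law of the score is Lebesgue measure restricted to the union of these
intervals. Listing the labels by decreasing probability, `ρ y` is the total length of the intervals
that come before that of `y`, so the intervals tile `[0, ∑ π] = [0, 1]`. This is checked on the
distribution functions: both sides give `[0, a]` the mass `min 1 (max 0 a)`. -/

open MeasureTheory ProbabilityTheory

lemma min_max_zero_add_min_max_zero_sub {c T : ℝ} (a : ℝ) (hc : 0 ≤ c) (hT : 0 ≤ T) :
    min c (max 0 a) + min T (max 0 (a - c)) = min (c + T) (max 0 a) := by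
  simp only [min_def, max_def]
  split_ifs <;> linarith

/-- `min (w y) (max 0 (a - ρ y))`, with `ρ y` the total weight strictly above `w y`, is the length
of `[ρ y, ρ y + w y] ∩ (-∞, a]`: these intervals tile `[0, ∑ w]`. -/
theorem Finset.sum_min_max_zero_sub_sum_gt {ι : Type*} [DecidableEq ι] (s : Finset ι)
    (w : ι → ℝ) (hw : ∀ y ∈ s, 0 ≤ w y) (hinj : Set.InjOn w s) (a : ℝ) :
    ∑ y ∈ s, min (w y) (max 0 (a - ∑ y' ∈ s with w y < w y', w y'))
      = min (∑ y ∈ s, w y) (max 0 a) := by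
  induction s using Finset.induction_on_max_value w generalizing a with
  | empty => simp
  | insert m s hm hmax ih =>
    have hlt : ∀ y ∈ s, w y < w m := fun y hy =>
      (hmax y hy).lt_of_ne fun h =>
        hm (hinj (Finset.mem_insert_of_mem hy) (Finset.mem_insert_self m s) h ▸ hy)
    have hw' : ∀ y ∈ s, 0 ≤ w y := fun y hy => hw y (Finset.mem_insert_of_mem hy)
    have htop : ∑ y' ∈ insert m s with w m < w y', w y' = 0 :=
      Finset.sum_eq_zero fun y' hy' => by
        obtain ⟨hy', hgt⟩ := Finset.mem_filter.mp hy'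
        rcases Finset.mem_insert.mp hy' with rfl | hy'
        · exact absurd hgt (lt_irrefl _)
        · exact absurd hgt (hmax y' hy').not_gt
    have hshift : ∀ y ∈ s, ∑ y' ∈ insert m s with w y < w y', w y'
        = w m + ∑ y' ∈ s with w y < w y', w y' := fun y hy => by
      rw [Finset.filter_insert, if_pos (hlt y hy),
        Finset.sum_insert fun h => hm (Finset.mem_filter.mp h).1]
    have hrest : ∑ y ∈ s, min (w y) (max 0 (a - ∑ y' ∈ insert m s with w y < w y', w y'))
        = min (∑ y ∈ s, w y) (max 0 (a - w m)) := by
      rw [← ih hw' (hinj.mono (Finset.coe_subset.mpr (Finset.subset_insert m s)))]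
      refine Finset.sum_congr rfl fun y hy => ?_
      rw [hshift y hy, sub_add_eq_sub_sub]
    rw [Finset.sum_insert hm, Finset.sum_insert hm, htop, sub_zero, hrest]
    exact min_max_zero_add_min_max_zero_sub a (hw m (Finset.mem_insert_self m s))
      (Finset.sum_nonneg hw')

lemma Real.volume_Iic_inter_Icc_zero (a c : ℝ) :
    volume (Set.Iic a ∩ Set.Icc 0 c) = ENNReal.ofReal (min c (max 0 a)) := by
  have : Set.Iic a ∩ Set.Icc 0 c = Set.Icc 0 (min a c) := by
    ext x
    simp only [Set.mem_inter_iff, Set.mem_Iic, Set.mem_Icc, le_min_iff]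
    tauto
  rw [this, Real.volume_Icc, sub_zero]
  rcases le_total 0 a with ha | ha
  · rw [max_eq_right ha, min_comm]
  · rw [ENNReal.ofReal_of_nonpos (min_le_of_left_le ha),
      ENNReal.ofReal_of_nonpos (min_le_of_right_le (max_eq_left ha).le)]

lemma Real.volume_restrict_Icc_zero_one_Iic (a : ℝ) :
    volume.restrict (Set.Icc (0 : ℝ) 1) (Set.Iic a) = ENNReal.ofReal (min 1 (max 0 a)) := by
  rw [Measure.restrict_apply measurableSet_Iic, Real.volume_Iic_inter_Icc_zero]

lemma mul_min_one_max_zero_div {c : ℝ} (x : ℝ) (hc : 0 < c) :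
    c * min 1 (max 0 (x / c)) = min c (max 0 x) := by
  rw [mul_min_of_nonneg _ _ hc.le, mul_max_of_nonneg _ _ hc.le, mul_div_cancel₀ _ hc.ne',
    mul_one, mul_zero]

lemma measure_add_mul_le_eq_sum {Ω ι : Type*} [MeasurableSpace Ω] [Fintype ι]
    [MeasurableSpace ι] [MeasurableSingletonClass ι] (μ : Measure Ω) {Y : Ω → ι} {U : Ω → ℝ}
    (hY : Measurable Y) (hU : Measurable U) (hindep : IndepFun Y U μ) (ρ π : ι → ℝ)
    (hπ : ∀ y, 0 < π y) (a : ℝ) :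
    μ ((fun ω => ρ (Y ω) + U ω * π (Y ω)) ⁻¹' Set.Iic a)
      = ∑ y, μ (Y ⁻¹' {y}) * μ (U ⁻¹' Set.Iic ((a - ρ y) / π y)) := by
  have hsplit : (fun ω => ρ (Y ω) + U ω * π (Y ω)) ⁻¹' Set.Iic a
      = ⋃ y, Y ⁻¹' {y} ∩ U ⁻¹' Set.Iic ((a - ρ y) / π y) := by
    ext ω
    simp only [Set.mem_preimage, Set.mem_Iic, Set.mem_iUnion, Set.mem_inter_iff,
      Set.mem_singleton_iff, exists_eq_left', le_div_iff₀ (hπ _)]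
    constructor <;> intro h <;> linarith
  rw [hsplit, measure_iUnion, tsum_fintype]
  · exact Finset.sum_congr rfl fun y _ =>
      hindep.measure_inter_preimage_eq_mul _ _ (measurableSet_singleton y) measurableSet_Iic
  · exact fun i j hij => Disjoint.mono Set.inter_subset_left Set.inter_subset_left
      ((Set.disjoint_singleton.mpr hij).preimage Y)
  · exact fun y => (hY (measurableSet_singleton y)).inter (hU measurableSet_Iic)

theorem randomized_score_uniform_general
    {Ω : Type*} [MeasurableSpace Ω] (μ : Measure Ω)
    (K : ℕ) (π : Fin K → ℝ) (hπ0 : ∀ y, 0 < π y) (hπ1 : ∑ y, π y = 1)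
    (hdist : Function.Injective π)
    (ρ : Fin K → ℝ) (hρ : ∀ y, ρ y = ∑ y', if π y < π y' then π y' else 0)
    (Y : Ω → Fin K) (hY : Measurable Y) (U : Ω → ℝ) (hU : Measurable U)
    (hYlaw : ∀ y, μ {ω | Y ω = y} = ENNReal.ofReal (π y))
    (hUlaw : Measure.map U μ = volume.restrict (Set.Icc (0 : ℝ) 1))
    (hindep : IndepFun Y U μ) :
    Measure.map (fun ω => ρ (Y ω) + U ω * π (Y ω)) μ
      = volume.restrict (Set.Icc (0 : ℝ) 1) := by
  have hR : Measurable fun ω => ρ (Y ω) + U ω * π (Y ω) :=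
    ((measurable_of_countable ρ).comp hY).add (hU.mul ((measurable_of_countable π).comp hY))
  have hUcdf (t : ℝ) : μ (U ⁻¹' Set.Iic t) = ENNReal.ofReal (min 1 (max 0 t)) := by
    rw [← Measure.map_apply hU measurableSet_Iic, hUlaw, Real.volume_restrict_Icc_zero_one_Iic]
  refine (Measure.ext_of_Iic _ _ fun a => ?_).symm
  rw [Measure.map_apply hR measurableSet_Iic, measure_add_mul_le_eq_sum μ hY hU hindep ρ π hπ0,
    Real.volume_restrict_Icc_zero_one_Iic, ← hπ1,
    ← Finset.sum_min_max_zero_sub_sum_gt _ π (fun y _ => (hπ0 y).le) hdist.injOn,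
    ENNReal.ofReal_sum_of_nonneg fun y _ => le_min (hπ0 y).le (le_max_left _ _)]
  refine Finset.sum_congr rfl fun y _ => ?_
  rw [show μ (Y ⁻¹' {y}) = _ from hYlaw y, hUcdf, ← ENNReal.ofReal_mul (hπ0 y).le,
    mul_min_one_max_zero_div _ (hπ0 y), hρ, Finset.sum_filter]

/-- with Y ~ π, U ~ Unif[0,1] independent, the randomized conformal
score R = ρ_Y + U·π_Y is uniformly distributed on [0,1]. -/
theorem randomized_score_uniform
    {Ω : Type*} [MeasurableSpace Ω] (μ : Measure Ω) [IsProbabilityMeasure μ]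
    (K : ℕ) (π : Fin K → ℝ) (hπ0 : ∀ y, 0 < π y) (hπ1 : ∑ y, π y = 1)
    (hdist : Function.Injective π)
    (ρ : Fin K → ℝ) (hρ : ∀ y, ρ y = ∑ y', if π y < π y' then π y' else 0)
    (Y : Ω → Fin K) (hY : Measurable Y) (U : Ω → ℝ) (hU : Measurable U)
    (hYlaw : ∀ y, μ {ω | Y ω = y} = ENNReal.ofReal (π y))
    (hUlaw : Measure.map U μ = volume.restrict (Set.Icc (0 : ℝ) 1))
    (hindep : IndepFun Y U μ) :
    Measure.map (fun ω => ρ (Y ω) + U ω * π (Y ω)) μ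
      = volume.restrict (Set.Icc (0 : ℝ) 1) :=
  randomized_score_uniform_general μ K π hπ0 hπ1 hdist ρ hρ Y hY U hU hYlaw hUlaw hindep
end
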